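/- arXiv:1611.09402 — 3 statements merged into one kernel-verified Lean document; each statement's English description precedes it below -/
import Mathlib

section
/- Let λ = λ₁ + iλ₂ be a solution of λ²ε + λ(−2iωμ⋆ε + 1) + (ω²(1 − μ⋆²ε) − iωμ⋆ − c) = 0 for some ω ∈ ℝ, where ε > 0, c < 0, 1 + 4εc > 0, and ω² ≤ c + 1/(4ε). Then λ₁ satisfies −1/(2ε) < λ₁ ≤ −1/(2ε) + (1/(2ε))√(1 + 4εc) < 0 or λ₁ ≥ −1/(2ε) − (1/(2ε))√(1 + 4εc); in particular Re λ < 0. -/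
open Complex

/-- If `λ` solves the Nagumo dispersion relation for some `ω` with
`ε > 0`, `c < 0`, `1 + 4εc > 0`, `ω² ≤ c + 1/(4ε)`, then
`−1/(2ε) < Re λ ≤ −1/(2ε) + (1/(2ε))√(1+4εc) < 0` or
`Re λ ≥ −1/(2ε) − (1/(2ε))√(1+4εc)`; in particular `Re λ < 0`. -/
theorem stmt4 (ε μ c ω : ℝ) (hε : 0 < ε) (hc : c < 0) (hd : 0 < 1 + 4 * ε * c)
    (hω : ω^2 ≤ c + 1 / (4 * ε)) (lam : ℂ)
    (hlam : lam^2 * (ε : ℂ) + lam * (-2 * I * ω * μ * ε + 1)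
        + ((ω : ℂ)^2 * (1 - (μ : ℂ)^2 * ε) - I * ω * μ - c) = 0) :
    ((-1 / (2 * ε) < lam.re
        ∧ lam.re ≤ -1 / (2 * ε) + (1 / (2 * ε)) * Real.sqrt (1 + 4 * ε * c)
        ∧ -1 / (2 * ε) + (1 / (2 * ε)) * Real.sqrt (1 + 4 * ε * c) < 0)
      ∨ lam.re ≥ -1 / (2 * ε) - (1 / (2 * ε)) * Real.sqrt (1 + 4 * ε * c))
    ∧ lam.re < 0 := by
  have hre := congrArg Complex.re hlam
  have him := congrArg Complex.im hlam
  simp only [Complex.add_re, Complex.add_im, Complex.mul_re, Complex.mul_im, pow_two,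
    Complex.sub_re, Complex.sub_im, Complex.I_re, Complex.I_im, Complex.ofReal_re,
    Complex.ofReal_im, Complex.one_re, Complex.one_im, Complex.neg_re, Complex.neg_im,
    Complex.re_ofNat, Complex.im_ofNat,
    Complex.zero_re, Complex.zero_im, mul_zero, zero_mul, mul_one, one_mul, sub_zero,
    zero_sub, add_zero, zero_add, neg_zero, neg_neg] at hre him
  set x := lam.re with hx
  set y := lam.im with hy
  set s := Real.sqrt (1 + 4 * ε * c) with hs
  have hs0 : 0 ≤ s := Real.sqrt_nonneg _
  have hs2 : s ^ 2 = 1 + 4 * ε * c := Real.sq_sqrt hd.le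
  have hs1 : s < 1 := by nlinarith
  have ht0 : (0:ℝ) < 1 / (2 * ε) := by positivity
  have htm : (1 / (2 * ε)) * (2 * ε) = 1 := by field_simp
  have hfac : (2 * ε * x + 1) * (y - ω * μ) = 0 := by linear_combination him
  rcases mul_eq_zero.mp hfac with hA | hB
  · -- x = -1/(2ε)
    have hxval : x = -1 / (2 * ε) := by
      field_simp
      linarith
    constructor
    · right
      rw [hxval]
      nlinarith [mul_nonneg ht0.le hs0]
    · rw [hxval]
      simp only [neg_div]
      exact neg_neg_iff_pos.mpr ht0
  · -- y = ω μ
    have hBy : y - ω * μ = 0 := by linarith [sub_eq_zero.mpr hB]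
    have hq : ε * x ^ 2 + x + ω ^ 2 - c = 0 := by
      linear_combination hre + ε * (y - ω * μ) * hBy
    have hsq : (2 * ε * x + 1) ^ 2 ≤ s ^ 2 := by nlinarith [sq_nonneg ω]
    have hup : 2 * ε * x + 1 ≤ s := by nlinarith
    have hlo : -s ≤ 2 * ε * x + 1 := by nlinarith
    have h2e : (0:ℝ) < 2 * ε := by positivity
    have heq : -1 / (2 * ε) - 1 / (2 * ε) * s = (-1 - s) / (2 * ε) := by ring
    constructor
    · right
      rw [ge_iff_le, heq, div_le_iff₀ h2e]
      linarith
    · have h2 : 2 * ε * x < 0 := by linarith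
      by_contra h
      push_neg at h
      have := mul_nonneg h2e.le h
      linarith
end

section
/- Every root λ of the quadratic λ²ε + λ(−2iωμ⋆ε + 1) + (ω²(1 − μ⋆²ε) − iωμ⋆ − c) = 0 with ε > 0, c < 0, ω ∈ ℝ has Re λ < 0. -/
open Complex

/-- Every root `λ` of
`λ²ε + λ(−2iωμ⋆ε + 1) + (ω²(1 − μ⋆²ε) − iωμ⋆ − c) = 0`
with `ε > 0`, `c < 0`, `ω ∈ ℝ` has `Re λ < 0`. -/
theorem stmt5 (ε μ c ω : ℝ) (hε : 0 < ε) (hc : c < 0) (lam : ℂ)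
    (hlam : lam^2 * (ε : ℂ) + lam * (-2 * I * ω * μ * ε + 1)
        + ((ω : ℂ)^2 * (1 - (μ : ℂ)^2 * ε) - I * ω * μ - c) = 0) :
    lam.re < 0 := by
  by_contra h
  push_neg at h
  have h1 := congrArg Complex.re hlam
  have h2 := congrArg Complex.im hlam
  simp [pow_two, Complex.mul_re, Complex.mul_im, Complex.add_re, Complex.add_im,
    Complex.sub_re, Complex.sub_im] at h1 h2
  set x := lam.re
  set y := lam.im
  have key : (y - ω*μ) * (2*ε*x + 1) = 0 := by linear_combination h2
  rcases mul_eq_zero.mp key with hy | hx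
  · have hy' : y = ω*μ := by linarith
    rw [hy'] at h1
    nlinarith [sq_nonneg ω, mul_nonneg (mul_nonneg hε.le h) h]
  · nlinarith
end

section
/- Let S ∈ ℝ^{d×d} be skew-symmetric, S = U Λ U^H with U unitary and Λ = diag(λ₁,…,λ_d). For i < j define E = U (I_{ij} − I_{ji}) Uᵀ, where I_{ij} is the matrix with 1 in entry (i,j) and 0 elsewhere. Then λ E = [E, S] holds with λ = −(λ_i + λ_j). -/
/-!
Since `S = U Λ Uᴴ` we have `S U = U Λ`, and transposing, skew-symmetry gives `Uᵀ S = -Λ Uᵀ`.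
Hence for `E = U A Uᵀ` the commutator is `E S - S E = -U (A Λ + Λ A) Uᵀ`, and for
`A = I_{ij} - I_{ji}` the anticommutator `A Λ + Λ A` is `(λ_i + λ_j) A`.
-/

open Matrix

namespace Matrix

variable {n R : Type*} [Fintype n] [DecidableEq n]

section Single

variable [CommSemiring R]

lemma single_mul_diagonal (lam : n → R) (i j : n) (c : R) :
    single i j c * diagonal lam = lam j • single i j c := by
  ext a b
  by_cases h : i = a ∧ j = b
  · obtain ⟨rfl, rfl⟩ := h
    simp [mul_comm]
  · simp [h]

lemma diagonal_mul_single (lam : n → R) (i j : n) (c : R) :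
    diagonal lam * single i j c = lam i • single i j c := by
  ext a b
  by_cases h : i = a ∧ j = b
  · obtain ⟨rfl, rfl⟩ := h
    simp
  · simp [h]

lemma single_mul_diagonal_add_diagonal_mul_single (lam : n → R) (i j : n) (c : R) :
    single i j c * diagonal lam + diagonal lam * single i j c = (lam i + lam j) • single i j c := by
  rw [single_mul_diagonal, diagonal_mul_single, add_smul, add_comm]

end Single

lemma single_sub_single_anticommute_diagonal [CommRing R] (lam : n → R) (i j : n) :
    let A := single i j (1 : R) - single j i 1
    A * diagonal lam + diagonal lam * A = (lam i + lam j) • A := by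
  intro A
  calc A * diagonal lam + diagonal lam * A
      = (single i j 1 * diagonal lam + diagonal lam * single i j 1)
          - (single j i 1 * diagonal lam + diagonal lam * single j i 1) := by
        simp only [A, Matrix.sub_mul, Matrix.mul_sub]; abel
    _ = (lam i + lam j) • A := by
        rw [single_mul_diagonal_add_diagonal_mul_single,
          single_mul_diagonal_add_diagonal_mul_single, add_comm (lam j), smul_sub]

section Unitary

variable [CommRing R] [StarRing R] {A D U : Matrix n n R}

lemma mul_eq_mul_of_eq_mul_mul_conjTranspose (hU : Uᴴ * U = 1) (hAD : A = U * D * Uᴴ) :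
    A * U = U * D := by
  rw [hAD, Matrix.mul_assoc, hU, Matrix.mul_one]

lemma transpose_mul_eq_neg_of_eq_mul_mul_conjTranspose (hA : Aᵀ = -A) (hU : Uᴴ * U = 1)
    (hAD : A = U * D * Uᴴ) : Uᵀ * A = -(Dᵀ * Uᵀ) := by
  have hAt : Aᵀ = Uᴴᵀ * Dᵀ * Uᵀ := by
    rw [hAD, transpose_mul, transpose_mul, Matrix.mul_assoc]
  rw [← neg_neg A, ← hA, hAt, Matrix.mul_neg, ← Matrix.mul_assoc, ← Matrix.mul_assoc,
    ← transpose_mul, hU, transpose_one, Matrix.one_mul]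

lemma mul_transpose_commutator_eq_neg (hA : Aᵀ = -A) (hU : Uᴴ * U = 1)
    (hAD : A = U * D * Uᴴ) (M : Matrix n n R) :
    U * M * Uᵀ * A - A * (U * M * Uᵀ) = -(U * (M * Dᵀ + D * M) * Uᵀ) := by
  have hright : U * M * Uᵀ * A = -(U * (M * Dᵀ) * Uᵀ) := by
    rw [Matrix.mul_assoc _ Uᵀ, transpose_mul_eq_neg_of_eq_mul_mul_conjTranspose hA hU hAD]
    simp only [Matrix.mul_neg, Matrix.mul_assoc]
  have hleft : A * (U * M * Uᵀ) = U * (D * M) * Uᵀ := by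
    rw [← Matrix.mul_assoc, ← Matrix.mul_assoc, mul_eq_mul_of_eq_mul_mul_conjTranspose hU hAD]
    simp only [Matrix.mul_assoc]
  rw [hright, hleft, Matrix.mul_add, Matrix.add_mul]
  abel

end Unitary

end Matrix

theorem stmt11_general (d : ℕ) (S : Matrix (Fin d) (Fin d) ℝ) (hskew : Sᵀ = -S)
    (U : Matrix (Fin d) (Fin d) ℂ) (hU : U ∈ Matrix.unitaryGroup (Fin d) ℂ)
    (lam : Fin d → ℂ)
    (hdiag : S.map (Complex.ofReal ·) = U * Matrix.diagonal lam * Uᴴ)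
    (i j : Fin d) :
    let Sc := S.map (Complex.ofReal ·)
    let E := U * (Matrix.single i j (1 : ℂ) - Matrix.single j i 1) * Uᵀ
    (-(lam i + lam j)) • E = E * Sc - Sc * E := by
  intro Sc E
  have hSc : Scᵀ = -Sc := by
    rw [← transpose_map, hskew, Matrix.map_neg _ Complex.ofReal_neg]
  have hUU : Uᴴ * U = 1 := by
    rw [← star_eq_conjTranspose]
    exact mem_unitaryGroup_iff'.mp hU
  rw [mul_transpose_commutator_eq_neg hSc hUU hdiag, diagonal_transpose,
    single_sub_single_anticommute_diagonal, Matrix.mul_smul, Matrix.smul_mul, neg_smul]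

/-- For skew-symmetric `S = U Λ U^H` (`U` unitary, `Λ = diag(λ₁,…,λ_d)`)
and `i < j`, the matrix `E = U (I_{ij} − I_{ji}) Uᵀ` satisfies `λ E = [E, S]`
with `λ = −(λ_i + λ_j)`. -/
theorem stmt11 (d : ℕ) (S : Matrix (Fin d) (Fin d) ℝ) (hskew : Sᵀ = -S)
    (U : Matrix (Fin d) (Fin d) ℂ) (hU : U ∈ Matrix.unitaryGroup (Fin d) ℂ)
    (lam : Fin d → ℂ)
    (hdiag : S.map (Complex.ofReal ·) = U * Matrix.diagonal lam * Uᴴ)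
    (i j : Fin d) (hij : i < j) :
    let Sc := S.map (Complex.ofReal ·)
    let E := U * (Matrix.single i j (1 : ℂ) - Matrix.single j i 1) * Uᵀ
    (-(lam i + lam j)) • E = E * Sc - Sc * E :=
  stmt11_general d S hskew U hU lam hdiag i j
end
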